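/- Multivariate deformed Cauchy formula, second form: let 0 < τ₂ < τ₁ be reals, let n, k be naturals with k ≥ 1, and let x₁, …, x_{k+1} be real numbers. Then C(x₁ + ⋯ + x_{k+1}, n) = Σ τ₁^{Σ_{j=1}^{k} (n − s_j)(x_j − r_j)} · τ₂^{Σ_{j=1}^{k} r_j(z_j − (n − s_j))} · ∏_{j=1}^{k+1} C(x_j, r_j), where the sum runs over all tuples (r₁,…,r_k) of naturals with r₁ + ⋯ + r_k ≤ n, and where s_j = r₁ + ⋯ + r_j, r_{k+1} = n − s_k, and z_j = x_{j+1} + ⋯ + x_{k+1}. -/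

import Mathlib

open Finset

noncomputable def dnum (τ₁ τ₂ x : ℝ) : ℝ := (τ₁ ^ x - τ₂ ^ x) / (τ₁ - τ₂)

noncomputable def dfac (τ₁ τ₂ : ℝ) (r : ℕ) : ℝ :=
  ∏ j ∈ Finset.range r, dnum τ₁ τ₂ ((j : ℝ) + 1)

noncomputable def dfall (τ₁ τ₂ x : ℝ) (r : ℕ) : ℝ :=
  ∏ i ∈ Finset.range r, dnum τ₁ τ₂ (x - (i : ℝ))

noncomputable def dbinom (τ₁ τ₂ x : ℝ) (r : ℕ) : ℝ := dfall τ₁ τ₂ x r / dfac τ₁ τ₂ r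

noncomputable def dmulti (τ₁ τ₂ x : ℝ) {k : ℕ} (r : Fin k → ℕ) : ℝ :=
  dfall τ₁ τ₂ x (∑ j, r j) / ∏ j, dfac τ₁ τ₂ (r j)

/-!
Peeling off `x₁` reduces the formula to the bivariate case
`C(x + y, n) = Σ_r τ₁^{(n-r)(x-r)} τ₂^{r(y-(n-r))} C(x, r) C(y, n-r)`, applied to `x = x₁` and
`y = x₂ + ⋯ + x_{k+1}`, followed by the formula for `k - 1` at level `n - r₁`. The bivariate
case is proved by induction on `n` using `C(z, n+1) [n+1] = C(z, n) [z-n]`: with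
`z = x + y` one splits `[x+y-n] = [(y-(n-r)) + (x-r)]` and `[n+1] = [r + (n+1-r)]` by the
deformed Pascal rule `[a+b] = τ₁^b [a] + τ₂^a [b]`, and the resulting sums agree after an
index shift.
-/

section DeformedNumbers

variable {τ₁ τ₂ : ℝ}

lemma dnum_zero : dnum τ₁ τ₂ 0 = 0 := by
  simp [dnum]

lemma dnum_pos (h₂ : 0 ≤ τ₂) (h : τ₂ < τ₁) {x : ℝ} (hx : 0 < x) : 0 < dnum τ₁ τ₂ x :=
  div_pos (sub_pos.2 (Real.rpow_lt_rpow h₂ h hx)) (sub_pos.2 h)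

lemma dnum_add (h₁ : 0 < τ₁) (h₂ : 0 < τ₂) (a b : ℝ) :
    dnum τ₁ τ₂ (a + b) = τ₁ ^ b * dnum τ₁ τ₂ a + τ₂ ^ a * dnum τ₁ τ₂ b := by
  simp only [dnum, Real.rpow_add h₁, Real.rpow_add h₂]
  ring

lemma dbinom_succ_mul_dnum (h₂ : 0 ≤ τ₂) (h : τ₂ < τ₁) (x : ℝ) (m : ℕ) :
    dbinom τ₁ τ₂ x (m + 1) * dnum τ₁ τ₂ (m + 1) = dbinom τ₁ τ₂ x m * dnum τ₁ τ₂ (x - m) := by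
  have hm : dnum τ₁ τ₂ (m + 1) ≠ 0 := (dnum_pos h₂ h (by positivity)).ne'
  simp only [dbinom, dfall, dfac, prod_range_succ]
  field_simp

end DeformedNumbers

noncomputable def dweight (τ₁ τ₂ x y : ℝ) (n r : ℕ) : ℝ :=
  τ₁ ^ (((n : ℝ) - r) * (x - r)) * τ₂ ^ ((r : ℝ) * (y - ((n : ℝ) - r)))

noncomputable def cauchySummand (τ₁ τ₂ x y : ℝ) (n r : ℕ) : ℝ :=
  dweight τ₁ τ₂ x y n r * (dbinom τ₁ τ₂ x r * dbinom τ₁ τ₂ y (n - r))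

section Bivariate

variable {τ₁ τ₂ : ℝ} (x y : ℝ) (n r : ℕ)

lemma dweight_mul_rpow_left (h₁ : 0 < τ₁) (h₂ : 0 < τ₂) :
    dweight τ₁ τ₂ x y n r * τ₁ ^ (x - r) = dweight τ₁ τ₂ x y (n + 1) r * τ₂ ^ (r : ℝ) := by
  rw [dweight, dweight, mul_right_comm, ← Real.rpow_add h₁, mul_assoc, ← Real.rpow_add h₂]
  congr 2 <;> push_cast <;> ring

lemma dweight_mul_rpow_right (h₁ : 0 < τ₁) (h₂ : 0 < τ₂) :
    dweight τ₁ τ₂ x y n r * τ₂ ^ (y - ((n : ℝ) - r)) =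
      dweight τ₁ τ₂ x y (n + 1) (r + 1) * τ₁ ^ ((n : ℝ) - r) := by
  rw [dweight, dweight, mul_assoc, ← Real.rpow_add h₂, mul_right_comm, ← Real.rpow_add h₁]
  congr 2 <;> push_cast <;> ring

lemma cauchySummand_mul_dnum_sub (h₂ : 0 < τ₂) (h : τ₂ < τ₁) (hr : r ≤ n) :
    cauchySummand τ₁ τ₂ x y n r * dnum τ₁ τ₂ (x + y - n) =
      τ₂ ^ (r : ℝ) * dnum τ₁ τ₂ (((n + 1 : ℕ) : ℝ) - r) * cauchySummand τ₁ τ₂ x y (n + 1) r +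
        τ₁ ^ (((n + 1 : ℕ) : ℝ) - (r + 1 : ℕ)) * dnum τ₁ τ₂ (r + 1 : ℕ) *
          cauchySummand τ₁ τ₂ x y (n + 1) (r + 1) := by
  have h₁ : 0 < τ₁ := h₂.trans h
  have hx := dbinom_succ_mul_dnum h₂.le h x r
  have hy := dbinom_succ_mul_dnum h₂.le h y (n - r)
  have hw₁ := dweight_mul_rpow_left x y n r h₁ h₂
  have hw₂ := dweight_mul_rpow_right x y n r h₁ h₂
  rw [Nat.cast_sub hr] at hy
  rw [show x + y - n = (y - (n - r)) + (x - r) by ring, dnum_add h₁ h₂]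
  simp only [cauchySummand, Nat.add_sub_add_right, Nat.succ_sub hr]
  push_cast
  rw [show (n : ℝ) + 1 - r = n - r + 1 by ring, show (n : ℝ) + 1 - (r + 1) = n - r by ring]
  linear_combination
    dbinom τ₁ τ₂ x r * dbinom τ₁ τ₂ y (n - r) * dnum τ₁ τ₂ (y - (n - r)) * hw₁ -
      dbinom τ₁ τ₂ x r * dweight τ₁ τ₂ x y (n + 1) r * τ₂ ^ (r : ℝ) * hy +
    dbinom τ₁ τ₂ y (n - r) * dbinom τ₁ τ₂ x r * dnum τ₁ τ₂ (x - r) * hw₂ -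
      dbinom τ₁ τ₂ y (n - r) * dweight τ₁ τ₂ x y (n + 1) (r + 1) * τ₁ ^ ((n : ℝ) - r) * hx

theorem dbinom_add_eq_sum (h₂ : 0 < τ₂) (h : τ₂ < τ₁) :
    dbinom τ₁ τ₂ (x + y) n = ∑ r ∈ range (n + 1), cauchySummand τ₁ τ₂ x y n r := by
  induction n with
  | zero => simp [cauchySummand, dweight, dbinom, dfall, dfac]
  | succ n ih =>
    have h₁ : 0 < τ₁ := h₂.trans h
    set a : ℕ → ℝ := fun r ↦
      τ₂ ^ (r : ℝ) * dnum τ₁ τ₂ (((n + 1 : ℕ) : ℝ) - r) * cauchySummand τ₁ τ₂ x y (n + 1) r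
    set b : ℕ → ℝ := fun r ↦
      τ₁ ^ (((n + 1 : ℕ) : ℝ) - r) * dnum τ₁ τ₂ r * cauchySummand τ₁ τ₂ x y (n + 1) r
    refine mul_right_cancel₀ (dnum_pos h₂.le h (x := (n : ℝ) + 1) (by positivity)).ne' ?_
    calc dbinom τ₁ τ₂ (x + y) (n + 1) * dnum τ₁ τ₂ (n + 1)
        = ∑ r ∈ range (n + 1), cauchySummand τ₁ τ₂ x y n r * dnum τ₁ τ₂ (x + y - n) := by
          rw [dbinom_succ_mul_dnum h₂.le h, ih, sum_mul]
      _ = ∑ r ∈ range (n + 1), (a r + b (r + 1)) :=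
          sum_congr rfl fun r hr ↦
            cauchySummand_mul_dnum_sub x y n r h₂ h (Nat.lt_succ_iff.1 (mem_range.1 hr))
      -- the shift costs nothing since `a (n + 1) = b 0 = 0`, both containing the factor `[0]`
      _ = ∑ r ∈ range (n + 2), (a r + b r) := by
          rw [sum_add_distrib, sum_add_distrib, sum_range_succ a (n + 1), sum_range_succ' b (n + 1)]
          simp [a, b, dnum_zero]
      _ = (∑ r ∈ range (n + 2), cauchySummand τ₁ τ₂ x y (n + 1) r) * dnum τ₁ τ₂ (n + 1) := by
          rw [sum_mul]
          refine sum_congr rfl fun r _ ↦ ?_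
          rw [show ((n : ℝ) + 1) = r + (((n + 1 : ℕ) : ℝ) - r) by push_cast; ring,
            dnum_add h₁ h₂]
          ring

end Bivariate

section Tuples

variable {M : Type*} [AddCommMonoid M]

lemma Fin.sum_Iic_zero {k : ℕ} (f : Fin (k + 1) → M) : ∑ i ∈ Iic 0, f i = f 0 := by
  rw [show Iic (0 : Fin (k + 1)) = {0} by ext i; simp, sum_singleton]

lemma Fin.sum_Iic_succ_cons {k : ℕ} (a : M) (s : Fin k → M) (j : Fin k) :
    ∑ i ∈ Iic j.succ, (Fin.cons a s : Fin (k + 1) → M) i = a + ∑ i ∈ Iic j, s i := by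
  simp only [← filter_ge_eq_Iic, sum_filter, Fin.sum_univ_succ, Fin.cons_zero, Fin.cons_succ,
    Fin.zero_le, if_true, Fin.succ_le_succ_iff]

lemma Fin.sum_filter_zero_lt {k : ℕ} (x : Fin (k + 1) → M) :
    ∑ i ∈ univ.filter fun i : Fin (k + 1) ↦ 0 < (i : ℕ), x i = ∑ i : Fin k, x i.succ := by
  simp [sum_filter, Fin.sum_univ_succ]

lemma Fin.sum_filter_succ_lt {k : ℕ} (x : Fin (k + 1) → M) (c : ℕ) :
    ∑ i ∈ univ.filter fun i : Fin (k + 1) ↦ c + 1 < (i : ℕ), x i =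
      ∑ i ∈ univ.filter fun i : Fin k ↦ c < (i : ℕ), x i.succ := by
  simp [sum_filter, Fin.sum_univ_succ]

def boundedTuples (k n : ℕ) : Finset (Fin k → ℕ) :=
  (Fintype.piFinset fun _ : Fin k ↦ range (n + 1)).filter fun r ↦ ∑ j, r j ≤ n

lemma mem_boundedTuples {k n : ℕ} {r : Fin k → ℕ} : r ∈ boundedTuples k n ↔ ∑ j, r j ≤ n := by
  simp only [boundedTuples, mem_filter, Fintype.mem_piFinset, mem_range, and_iff_right_iff_imp]
  exact fun h j ↦ Nat.lt_succ_of_le ((single_le_sum (fun _ _ ↦ Nat.zero_le _) (mem_univ j)).trans h)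

lemma boundedTuples_zero (n : ℕ) : boundedTuples 0 n = {Fin.elim0} :=
  eq_singleton_iff_unique_mem.2 ⟨mem_boundedTuples.2 (by simp), fun _ _ ↦ funext fun i ↦ i.elim0⟩

lemma sum_boundedTuples_succ (k n : ℕ) (F : (Fin (k + 1) → ℕ) → M) :
    ∑ r ∈ boundedTuples (k + 1) n, F r =
      ∑ a ∈ range (n + 1), ∑ s ∈ boundedTuples k (n - a), F (Fin.cons a s) := by
  rw [sum_sigma']
  refine sum_nbij' (fun r ↦ ⟨r 0, Fin.tail r⟩) (fun p ↦ Fin.cons p.1 p.2) ?_ ?_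
    (fun r _ ↦ Fin.cons_self_tail r) (fun p _ ↦ by simp) (fun r _ ↦ by rw [Fin.cons_self_tail])
  · intro r hr
    simp only [mem_sigma, mem_range, mem_boundedTuples, Fin.sum_univ_succ] at hr ⊢
    exact ⟨by omega, by simp only [Fin.tail]; omega⟩
  · intro p hp
    simp only [mem_sigma, mem_range, mem_boundedTuples, Fin.sum_univ_succ, Fin.cons_zero,
      Fin.cons_succ] at hp ⊢
    omega

end Tuples

section Multivariate

variable {τ₁ τ₂ : ℝ} {k : ℕ}

noncomputable def exponent₁ (n : ℕ) (x : Fin (k + 1) → ℝ) (r : Fin k → ℕ) : ℝ :=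
  ∑ j : Fin k, ((n : ℝ) - ((∑ i ∈ Iic j, r i : ℕ) : ℝ)) * (x j.castSucc - (r j : ℝ))

noncomputable def exponent₂ (n : ℕ) (x : Fin (k + 1) → ℝ) (r : Fin k → ℕ) : ℝ :=
  ∑ j : Fin k, (r j : ℝ) *
    ((∑ i ∈ univ.filter fun i : Fin (k + 1) ↦ (j : ℕ) < (i : ℕ), x i) -
      ((n : ℝ) - ((∑ i ∈ Iic j, r i : ℕ) : ℝ)))

noncomputable def multiCauchySummand (τ₁ τ₂ : ℝ) (n : ℕ) (x : Fin (k + 1) → ℝ)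
    (r : Fin k → ℕ) : ℝ :=
  τ₁ ^ exponent₁ n x r * τ₂ ^ exponent₂ n x r *
    ∏ j, dbinom τ₁ τ₂ (x j) ((Fin.snoc r (n - ∑ i, r i) : Fin (k + 1) → ℕ) j)

variable {n a : ℕ} (x : Fin (k + 2) → ℝ) (s : Fin k → ℕ)

lemma exponent₁_cons (ha : a ≤ n) :
    exponent₁ n x (Fin.cons a s) =
      ((n : ℝ) - a) * (x 0 - a) + exponent₁ (n - a) (fun i ↦ x i.succ) s := by
  rw [exponent₁, Fin.sum_univ_succ, Fin.sum_Iic_zero, exponent₁]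
  congr 1
  refine sum_congr rfl fun j _ ↦ ?_
  rw [Fin.sum_Iic_succ_cons, Fin.cons_succ, ← Fin.succ_castSucc, Nat.cast_sub ha]
  push_cast
  ring

lemma exponent₂_cons (ha : a ≤ n) :
    exponent₂ n x (Fin.cons a s) =
      a * (∑ i : Fin (k + 1), x i.succ - ((n : ℝ) - a)) +
        exponent₂ (n - a) (fun i ↦ x i.succ) s := by
  rw [exponent₂, Fin.sum_univ_succ, Fin.sum_Iic_zero, exponent₂]
  congr 1
  · rw [Fin.val_zero, Fin.sum_filter_zero_lt, Fin.cons_zero]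
  refine sum_congr rfl fun j _ ↦ ?_
  rw [Fin.sum_Iic_succ_cons, Fin.cons_succ, Fin.val_succ, Fin.sum_filter_succ_lt,
    Nat.cast_sub ha]
  push_cast
  ring

lemma multiCauchySummand_cons (h₁ : 0 < τ₁) (h₂ : 0 < τ₂) (ha : a ≤ n) :
    multiCauchySummand τ₁ τ₂ n x (Fin.cons a s) =
      dweight τ₁ τ₂ (x 0) (∑ i : Fin (k + 1), x i.succ) n a * dbinom τ₁ τ₂ (x 0) a *
        multiCauchySummand τ₁ τ₂ (n - a) (fun i ↦ x i.succ) s := by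
  have hlast : n - ∑ i, (Fin.cons a s : Fin (k + 1) → ℕ) i = n - a - ∑ i, s i := by
    rw [Fin.sum_univ_succ]
    simp only [Fin.cons_zero, Fin.cons_succ]
    omega
  rw [multiCauchySummand, multiCauchySummand, exponent₁_cons x s ha, exponent₂_cons x s ha,
    hlast, ← Fin.cons_snoc_eq_snoc_cons, Fin.prod_univ_succ, Real.rpow_add h₁,
    Real.rpow_add h₂, dweight]
  simp only [Fin.cons_zero, Fin.cons_succ]
  ring

theorem dbinom_sum_eq_sum (h₂ : 0 < τ₂) (h : τ₂ < τ₁) (n : ℕ) (x : Fin (k + 1) → ℝ) :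
    dbinom τ₁ τ₂ (∑ i, x i) n =
      ∑ r ∈ boundedTuples k n, multiCauchySummand τ₁ τ₂ n x r := by
  induction k generalizing n with
  | zero => simp [boundedTuples_zero, multiCauchySummand, exponent₁, exponent₂, Fin.snoc]
  | succ k ih =>
    have h₁ : 0 < τ₁ := h₂.trans h
    rw [Fin.sum_univ_succ, dbinom_add_eq_sum _ _ _ h₂ h, sum_boundedTuples_succ]
    refine sum_congr rfl fun a ha ↦ ?_
    rw [cauchySummand, ih (n - a) (fun i ↦ x i.succ), mul_sum, mul_sum]
    refine sum_congr rfl fun s _ ↦ ?_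
    rw [multiCauchySummand_cons x s h₁ h₂ (Nat.lt_succ_iff.1 (mem_range.1 ha))]
    ring

end Multivariate

theorem deformed_multivariate_cauchy_second_general
    (τ₁ τ₂ : ℝ) (hτ₂ : 0 < τ₂) (hττ : τ₂ < τ₁)
    (n k : ℕ) (x : Fin (k + 1) → ℝ) :
    dbinom τ₁ τ₂ (∑ i, x i) n =
      ∑ r ∈ (Fintype.piFinset fun _ : Fin k => Finset.range (n + 1)).filter
          (fun r => ∑ j, r j ≤ n),
        τ₁ ^ (∑ j : Fin k, ((n : ℝ) - ((∑ i ∈ Finset.Iic j, r i : ℕ) : ℝ)) *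
            (x j.castSucc - (r j : ℝ))) *
          τ₂ ^ (∑ j : Fin k, (r j : ℝ) *
              ((∑ i ∈ Finset.univ.filter fun i : Fin (k + 1) => (j : ℕ) < (i : ℕ), x i) -
                ((n : ℝ) - ((∑ i ∈ Finset.Iic j, r i : ℕ) : ℝ)))) *
          ∏ j : Fin (k + 1), dbinom τ₁ τ₂ (x j) ((Fin.snoc r (n - ∑ i, r i) : Fin (k + 1) → ℕ) j) :=
  dbinom_sum_eq_sum hτ₂ hττ n x

/-- Multivariate deformed Cauchy formula, second form:
`C(x₁+⋯+x_{k+1}, n) = Σ τ₁^{Σ_j (n−s_j)(x_j−r_j)} τ₂^{Σ_j r_j(z_j−(n−s_j))}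
  Π_j C(x_j, r_j)`, summed over tuples `(r₁,…,r_k)` with `r₁+⋯+r_k ≤ n`,
where `s_j = r₁+⋯+r_j`, `r_{k+1} = n − s_k` and `z_j = x_{j+1}+⋯+x_{k+1}`. -/
theorem deformed_multivariate_cauchy_second
    (τ₁ τ₂ : ℝ) (hτ₂ : 0 < τ₂) (hττ : τ₂ < τ₁)
    (n k : ℕ) (hk : 1 ≤ k) (x : Fin (k + 1) → ℝ) :
    dbinom τ₁ τ₂ (∑ i, x i) n =
      ∑ r ∈ (Fintype.piFinset fun _ : Fin k => Finset.range (n + 1)).filter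
          (fun r => ∑ j, r j ≤ n),
        τ₁ ^ (∑ j : Fin k, ((n : ℝ) - ((∑ i ∈ Finset.Iic j, r i : ℕ) : ℝ)) *
            (x j.castSucc - (r j : ℝ))) *
          τ₂ ^ (∑ j : Fin k, (r j : ℝ) *
              ((∑ i ∈ Finset.univ.filter fun i : Fin (k + 1) => (j : ℕ) < (i : ℕ), x i) -
                ((n : ℝ) - ((∑ i ∈ Finset.Iic j, r i : ℕ) : ℝ)))) *
          ∏ j : Fin (k + 1), dbinom τ₁ τ₂ (x j) ((Fin.snoc r (n - ∑ i, r i) : Fin (k + 1) → ℕ) j) :=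
  deformed_multivariate_cauchy_second_general τ₁ τ₂ hτ₂ hττ n k x
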